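/- The Hietarinta–Viallet action φ on Pic permutes the classes of the exceptional configuration as follows: φ(D0) = D5, φ(D1) = D4, φ(D2) = D3, φ(D3) = D7, φ(D4) = D8, φ(D5) = D9, φ(D6) = D6, φ(D7) = D0, φ(D8) = D1, φ(D9) = D2, φ(D10) = D11, φ(D11) = D12, φ(D12) = D10, φ(C0) = C3, φ(C1) = C2, φ(C2) = C0, φ(C4) = C1. -/
import Mathlib


/-- The Picard lattice of the space of initial values of the HV equation:
the free ℤ-module of rank 16 with basis `H0, H1, E1, …, E14`. -/
abbrev Pic : Type := Fin 16 → ℤ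

/-- The class `H0` (total transform of a line `x = const`). -/
def H0 : Pic := Pi.single 0 1

/-- The class `H1` (total transform of a line `y = const`). -/
def H1 : Pic := Pi.single 1 1

/-- The exceptional classes: `E k` is the paper's `E_{k+1}` for `k : Fin 14`. -/
def E (k : Fin 14) : Pic := Pi.single k.succ.succ 1

/-- The intersection form: `H0·H1 = 1`, `H0·H0 = H1·H1 = 0`, `Ek·El = -δ`, `Hi·Ek = 0`. -/
def ip (u v : Pic) : ℤ :=
  u 0 * v 1 + u 1 * v 0 - ∑ k : Fin 14, u k.succ.succ * v k.succ.succ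

/-- The canonical class `K = -2H0 - 2H1 + E1 + ⋯ + E14`. -/
def KX : Pic := (-2 : ℤ) • H0 + (-2 : ℤ) • H1 + ∑ k : Fin 14, E k

/-- The classes `D0, …, D12` of the irreducible components of `-K`. -/
def D : Fin 13 → Pic :=
  ![E 0 - E 1, E 1 - E 2, E 2 - E 3,
    E 4 - E 5, E 5 - E 6, E 6 - E 7,
    E 8 - E 9, E 10 - E 11, E 11 - E 12, E 12 - E 13,
    H0 - E 0 - E 1 - E 8, H1 - E 4 - E 5 - E 8, E 9 - E 10 - E 11]

/-- The root basis `α1, α2, α3` of the orthogonal complement of the `D`'s. -/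
def α : Fin 3 → Pic :=
  ![(2 : ℤ) • H1 - E 0 - E 1 - E 2 - E 3,
    (2 : ℤ) • H0 - E 4 - E 5 - E 6 - E 7,
    (2 : ℤ) • H0 + (2 : ℤ) • H1 - (2 : ℤ) • E 8 - (2 : ℤ) • E 9 - E 10 - E 11 - E 12 - E 13]

/-- The ℤ-linear map sending the `j`-th basis vector to `f j`. -/
def ofImages (f : Fin 16 → Pic) : Pic →ₗ[ℤ] Pic :=
  Matrix.toLin' (Matrix.of fun i j => f j i)

/-- The generator `w1`. -/
def w1 : Pic →ₗ[ℤ] Pic := ofImages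
  ![H0 + (2 : ℤ) • H1 - E 0 - E 1 - E 2 - E 3, H1,
    H1 - E 3, H1 - E 2, H1 - E 1, H1 - E 0,
    E 4, E 5, E 6, E 7, E 8, E 9, E 10, E 11, E 12, E 13]

/-- The generator `w2`. -/
def w2 : Pic →ₗ[ℤ] Pic := ofImages
  ![H0, (2 : ℤ) • H0 + H1 - E 4 - E 5 - E 6 - E 7,
    E 0, E 1, E 2, E 3,
    H0 - E 7, H0 - E 6, H0 - E 5, H0 - E 4,
    E 8, E 9, E 10, E 11, E 12, E 13]

/-- The generator `w3`. -/
def w3 : Pic →ₗ[ℤ] Pic := ofImages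
  ![H0 + α 2, H1 + α 2,
    E 0, E 1, E 2, E 3, E 4, E 5, E 6, E 7,
    E 8 + α 2, E 9 + α 2,
    E 10 + (H0 + H1 - E 8 - E 9 - E 10 - E 13),
    E 11 + (H0 + H1 - E 8 - E 9 - E 11 - E 12),
    E 12 + (H0 + H1 - E 8 - E 9 - E 11 - E 12),
    E 13 + (H0 + H1 - E 8 - E 9 - E 10 - E 13)]

/-- The generator `σ12`. -/
def s12 : Pic →ₗ[ℤ] Pic := ofImages
  ![H1, H0, E 4, E 5, E 6, E 7, E 0, E 1, E 2, E 3,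
    E 8, E 9, E 10, E 11, E 12, E 13]

/-- The generator `σ13`. -/
def s13 : Pic →ₗ[ℤ] Pic := ofImages
  ![H0, H0 + H1 - E 8 - E 9,
    E 10, E 11, E 12, E 13,
    E 4, E 5, E 6, E 7,
    H0 - E 9, H0 - E 8,
    E 0, E 1, E 2, E 3]

/-- The action `φ` of the Hietarinta–Viallet equation on the Picard lattice. -/
def phiHV : Pic →ₗ[ℤ] Pic := ofImages
  ![(3 : ℤ) • H0 + H1 - E 4 - E 5 - E 6 - E 7 - E 8 - E 9, H0,
    H0 - E 7, H0 - E 6, H0 - E 5, H0 - E 4,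
    E 10, E 11, E 12, E 13,
    H0 - E 9, H0 - E 8,
    E 0, E 1, E 2, E 3]

/-- The `(-1)`-classes `C0 = E4`, `C1 = E8`, `C2 = E14`, `C3 = H0-E5`, `C4 = H1-E1`. -/
def C : Fin 5 → Pic := ![E 3, E 7, E 13, H0 - E 4, H1 - E 0]

/-- The Hietarinta–Viallet action `φ` permutes the classes of the exceptional
configuration as stated. -/
theorem phiHV_permutes_configuration :
    phiHV (D 0) = D 5 ∧ phiHV (D 1) = D 4 ∧ phiHV (D 2) = D 3 ∧
    phiHV (D 3) = D 7 ∧ phiHV (D 4) = D 8 ∧ phiHV (D 5) = D 9 ∧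
    phiHV (D 6) = D 6 ∧ phiHV (D 7) = D 0 ∧ phiHV (D 8) = D 1 ∧
    phiHV (D 9) = D 2 ∧ phiHV (D 10) = D 11 ∧ phiHV (D 11) = D 12 ∧
    phiHV (D 12) = D 10 ∧
    phiHV (C 0) = C 3 ∧ phiHV (C 1) = C 2 ∧ phiHV (C 2) = C 0 ∧ phiHV (C 4) = C 1 := by
  refine ⟨?_,?_,?_,?_,?_,?_,?_,?_,?_,?_,?_,?_,?_,?_,?_,?_,?_⟩ <;> decide
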